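/- Let u be a node. If an execution contains two transitions C_0 ↦ C_1 and C_2 ↦ C_3 with C_1 ↦* C_2, in each of which node u executes the Reset rule, and these are consecutive Reset moves of u (u executes no Reset in any transition strictly between C_1 and C_2), then u executes exactly one rule among Seduction(a) (for some neighbor a) and Marriage(a) (for some neighbor a) in the transitions occurring between C_1 and C_2. -/
import Mathlib


/-!
Formal model of the self-stabilizing maximal-matching algorithm in the
link-register model under read/write atomicity.

Nodes form a finite simple graph `G` on a vertex type `V` whose linear order
plays the role of the distinct identifiers.  A configuration records, for each
node `u`, its pointer `p u : Option V` (`none` = null), its lock variable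
`m u : Fin 3`, and for each (directed) link a register `r u v : RegFlag × Fin 3`.
-/

inductive RegFlag where
  | Idle | You | Other
deriving DecidableEq

abbrev RegVal : Type := RegFlag × Fin 3

inductive Rule (V : Type) where
  | write (a : V)
  | seduction (a : V)
  | marriage (a : V)
  | increase
  | reset
deriving DecidableEq

structure Config (V : Type) where
  p : V → Option V
  m : V → Fin 3
  r : V → V → RegVal

variable {V : Type}

def correctRegisterValue [DecidableEq V] (C : Config V) (u a : V) : RegVal :=
  match C.p u with
  | none => (RegFlag.Idle, 0)
  | some b => if b = a then (RegFlag.You, C.m u) else (RegFlag.Other, C.m u)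

def PRabandonment [LinearOrder V] (C : Config V) (u : V) : Prop :=
  ∃ v, C.p u = some v ∧
    (((C.r v u).1 ≠ RegFlag.You ∧ (v < u ∨ C.m u ≠ 0)) ∨
     (C.r v u = (RegFlag.Other, 2) ∧ u < v))

def PRreset [LinearOrder V] (C : Config V) (u : V) : Prop :=
  ∃ v, C.p u = some v ∧ (C.r v u).1 = RegFlag.You ∧
    ((C.m u = 0 ∧ (C.r v u).2 = 2) ∨
     (C.m u = 2 ∧ (C.r v u).2 = 0) ∨
     (C.m u = 0 ∧ (C.r v u).2 = 1 ∧ v < u) ∨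
     (C.m u = 1 ∧ (C.r v u).2 = 0 ∧ u < v) ∨
     (C.m u = 1 ∧ (C.r v u).2 = 2 ∧ u < v) ∨
     (C.m u = 2 ∧ (C.r v u).2 = 1 ∧ v < u))

/-- The guard of each rule of node `u` in configuration `C`. -/
def eligible [LinearOrder V] (G : SimpleGraph V) (C : Config V) (u : V) : Rule V → Prop
  | .write a => G.Adj u a ∧ C.r u a ≠ correctRegisterValue C u a
  | .seduction a => G.Adj u a ∧ C.p u = none ∧ C.r u a = correctRegisterValue C u a ∧
      C.r a u = (RegFlag.Idle, 0) ∧ u < a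
  | .marriage a => G.Adj u a ∧ C.p u = none ∧ C.r u a = correctRegisterValue C u a ∧
      C.r a u = (RegFlag.You, 0) ∧ a < u
  | .increase => ∃ v, C.p u = some v ∧ C.r u v = correctRegisterValue C u v ∧
      (C.r v u).1 = RegFlag.You ∧
      ((C.m u = 0 ∧ ((u < v ∧ (C.r v u).2 = 1) ∨ (v < u ∧ (C.r v u).2 = 0))) ∨
       (C.m u = 1 ∧ ((u < v ∧ (C.r v u).2 = 1) ∨ (v < u ∧ (C.r v u).2 = 2))))
  | .reset => ∃ v, C.p u = some v ∧ C.r u v = correctRegisterValue C u v ∧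
      (PRabandonment C u ∨ PRreset C u)

/-- Simultaneous application of (at most) one rule per node.  `A u = some R`
means node `u` executes rule `R`; each action only modifies the data owned by
the acting node. -/
def step [DecidableEq V] (C : Config V) (A : V → Option (Rule V)) : Config V where
  p u :=
    match A u with
    | some (Rule.seduction a) => some a
    | some (Rule.marriage a) => some a
    | some Rule.reset => none
    | _ => C.p u
  m u :=
    match A u with
    | some (Rule.seduction _) => 0
    | some (Rule.marriage _) => 0
    | some Rule.reset => 0
    | some Rule.increase => C.m u + 1
    | _ => C.m u
  r u a :=
    match A u with
    | some (Rule.write b) => if a = b then correctRegisterValue C u a else C.r u a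
    | _ => C.r u a

/-- An execution `C_0, A_0, C_1, A_1, …, C_T`: at each transition `i < T`, a
nonempty set of eligible rules (at most one per node) is executed
simultaneously. -/
structure Execution [LinearOrder V] (G : SimpleGraph V) where
  T : ℕ
  conf : ℕ → Config V
  act : ℕ → V → Option (Rule V)
  act_nonempty : ∀ i < T, ∃ u, (act i u).isSome
  act_eligible : ∀ i < T, ∀ u R, act i u = some R → eligible G (conf i) u R
  conf_succ : ∀ i < T, conf (i + 1) = step (conf i) (act i)

/-- A configuration is stable if no rule is eligible at any node. -/
def stableConfig [LinearOrder V] (G : SimpleGraph V) (C : Config V) : Prop :=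
  ∀ u R, ¬ eligible G C u R

/-- The edge `(s,t)` (with `s < t` intended) is in state `(You, α, β)`. -/
def edgeState (C : Config V) (s t : V) (α β : Fin 3) : Prop :=
  C.p s = some t ∧ C.p t = some s ∧ C.m s = α ∧ C.m t = β

def updatedCorrectState (C : Config V) (s t : V) (α β : Fin 3) : Prop :=
  edgeState C s t α β ∧ C.r s t = (RegFlag.You, α) ∧ C.r t s = (RegFlag.You, β) ∧
    ((α, β) = ((0 : Fin 3), (0 : Fin 3)) ∨ (α, β) = (0, 1) ∨ (α, β) = (1, 1) ∨
     (α, β) = (2, 1) ∨ (α, β) = (2, 2))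

def toUpdateCorrectState (C : Config V) (s t : V) (α β : Fin 3) : Prop :=
  edgeState C s t α β ∧
    ((((α, β) = ((0 : Fin 3), (1 : Fin 3)) ∨ (α, β) = (2, 2)) ∧
        C.r s t = (RegFlag.You, α) ∧ C.r t s = (RegFlag.You, β - 1)) ∨
     (((α, β) = ((1 : Fin 3), (1 : Fin 3)) ∨ (α, β) = (2, 1)) ∧
        C.r s t = (RegFlag.You, α - 1) ∧ C.r t s = (RegFlag.You, β)))

def correctState (C : Config V) (s t : V) (α β : Fin 3) : Prop :=
  updatedCorrectState C s t α β ∨ toUpdateCorrectState C s t α β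

/-- Node `u` executes a `v`-rule in transition `k`: one of `Write(v)`,
`Seduction(v)`, `Marriage(v)`, a `v`-`Increase` or a `v`-`Reset`. -/
def execVRule [LinearOrder V] {G : SimpleGraph V} (E : Execution G) (k : ℕ) (u v : V) : Prop :=
  k < E.T ∧
    (E.act k u = some (Rule.write v) ∨ E.act k u = some (Rule.seduction v) ∨
     E.act k u = some (Rule.marriage v) ∨
     ((E.act k u = some Rule.increase ∨ E.act k u = some Rule.reset) ∧
       (E.conf k).p u = some v))

/-- Between two consecutive `Reset` moves of a node `u`,
node `u` executes exactly one rule among the `Seduction(-)` and `Marriage(-)`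
rules. -/
theorem stmt_9 {V : Type} [Fintype V] [LinearOrder V] (G : SimpleGraph V)
    (u : V) (E : Execution G) (i j : ℕ) (hij : i + 1 ≤ j) (hjT : j < E.T)
    (hi : E.act i u = some Rule.reset) (hj : E.act j u = some Rule.reset)
    (hcons : ∀ k, i < k → k < j → E.act k u ≠ some Rule.reset) :
    ∃! k, (i + 1 ≤ k ∧ k + 1 ≤ j) ∧
      ∃ a, E.act k u = some (Rule.seduction a) ∨ E.act k u = some (Rule.marriage a) := by
  have hiT : i < E.T := lt_trans (Nat.lt_of_succ_le hij) hjT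
  set P : ℕ → Prop :=
    fun k => ∃ a, E.act k u = some (Rule.seduction a) ∨ E.act k u = some (Rule.marriage a)
    with hPdef
  have inv : ∀ d, i + 1 + d ≤ j →
      (((E.conf (i+1+d)).p u = none ∧ ∀ l, i+1 ≤ l → l < i+1+d → ¬ P l) ∨
       ((E.conf (i+1+d)).p u ≠ none ∧ ∃! l, (i+1 ≤ l ∧ l < i+1+d) ∧ P l)) := by
    intro d
    induction d with
    | zero =>
      intro _
      left
      constructor
      · rw [E.conf_succ i hiT]
        show (match E.act i u with
          | some (Rule.seduction a) => some a
          | some (Rule.marriage a) => some a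
          | some Rule.reset => none
          | _ => (E.conf i).p u) = none
        rw [hi]
      · intro l h1 h2; omega
    | succ d ih =>
      intro hle
      set k := i + 1 + d with hk
      have hkj : k < j := by omega
      have hkT : k < E.T := lt_trans hkj hjT
      have hik : i < k := by omega
      rw [show i + 1 + (d + 1) = k + 1 by omega]
      by_cases hP : P k
      · obtain ⟨a, ha⟩ := hP
        have hpnone : (E.conf k).p u = none := by
          rcases ha with ha | ha
          · exact (E.act_eligible k hkT u _ ha).2.1
          · exact (E.act_eligible k hkT u _ ha).2.1
        rcases ih (by omega) with ⟨hpn, hno⟩ | ⟨hpn, _⟩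
        · right
          constructor
          · rw [E.conf_succ k hkT]
            show (match E.act k u with
              | some (Rule.seduction a) => some a
              | some (Rule.marriage a) => some a
              | some Rule.reset => none
              | _ => (E.conf k).p u) ≠ none
            rcases ha with ha | ha <;> rw [ha] <;> simp
          · refine ⟨k, ⟨⟨by omega, by omega⟩, ⟨a, ha⟩⟩, ?_⟩
            rintro l ⟨⟨hl1, hl2⟩, hlP⟩
            by_contra hne
            exact hno l hl1 (by omega) hlP
        · exact absurd hpnone hpn
      · have hnr : E.act k u ≠ some Rule.reset := hcons k hik hkj
        have hpeq : (E.conf (k+1)).p u = (E.conf k).p u := by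
          rw [E.conf_succ k hkT]
          show (match E.act k u with
            | some (Rule.seduction a) => some a
            | some (Rule.marriage a) => some a
            | some Rule.reset => none
            | _ => (E.conf k).p u) = (E.conf k).p u
          rcases hA : E.act k u with _ | R
          · rfl
          · cases R with
            | write a => rfl
            | seduction a => exact absurd ⟨a, Or.inl hA⟩ hP
            | marriage a => exact absurd ⟨a, Or.inr hA⟩ hP
            | increase => rfl
            | reset => exact absurd hA hnr
        rcases ih (by omega) with ⟨hpn, hno⟩ | ⟨hpn, l₀, ⟨hl₀, hl₀P⟩, huniq⟩
        · left
          refine ⟨by rw [hpeq]; exact hpn, ?_⟩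
          intro l h1 h2
          rcases Nat.lt_or_ge l k with h | h
          · exact hno l h1 h
          · have : l = k := by omega
            subst this; exact hP
        · right
          refine ⟨by rw [hpeq]; exact hpn, l₀, ⟨⟨hl₀.1, by omega⟩, hl₀P⟩, ?_⟩
          rintro l ⟨⟨h1, h2⟩, hlP⟩
          rcases Nat.lt_or_ge l k with h | h
          · exact huniq l ⟨⟨h1, h⟩, hlP⟩
          · have : l = k := by omega
            subst this; exact absurd hlP hP
  have hj' := inv (j - (i+1)) (by omega)
  rw [show i + 1 + (j - (i+1)) = j by omega] at hj'
  have hpj : (E.conf j).p u ≠ none := by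
    obtain ⟨v, hv, -⟩ := E.act_eligible j hjT u _ hj
    rw [hv]; simp
  rcases hj' with ⟨hpn, _⟩ | ⟨_, l₀, ⟨⟨h1, h2⟩, hl₀P⟩, huniq⟩
  · exact absurd hpn hpj
  · refine ⟨l₀, ⟨⟨h1, h2⟩, hl₀P⟩, ?_⟩
    rintro l ⟨⟨ha, hb⟩, hc⟩
    exact huniq l ⟨⟨ha, hb⟩, hc⟩
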